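/- With the numerical fluxes v*·n = τ(v·n) + (1−τ)(g·n) − α(n·σn − p), v*·m = v·m, p* = n·(σn)* = τp + (1−τ)(n·σn) − β((v−g)·n), m·(σn)* = 0, the pointwise interface power I = (p* − p)(g·n) + p((g·n)*) − (σn)·(v* − v) − (σn)*·v, where (g·n)* = v*·n, equals α(n·σn − p)² + β(g·n − v·n)² for all values of τ, α, β and all p ∈ ℝ, g, v ∈ ℝ², σ ∈ Matrix (Fin 2) (Fin 2) ℝ. -/

import Mathlib

/-!
Because `n, m` is an orthonormal basis of `ℝ²`, `σn · w = (σn·n)(w·n) + (σn·m)(w·m)`. The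
tangential flux `v*·m = v·m` kills the tangential part of `σn · (v* − v)`, leaving
`(v*·n − v·n)(n·σn)`. What remains is a polynomial identity in the normal data, in which the
`τ`-terms cancel and the `α`- and `β`-penalties produce the two squares.
-/

open Matrix

theorem sum_dotProduct_smul_of_orthonormal {ι R : Type*} [Fintype ι] [DecidableEq ι]
    [CommRing R] (b : ι → ι → R) (hb : ∀ i j, b i ⬝ᵥ b j = (1 : Matrix ι ι R) i j)
    (v : ι → R) : ∑ i, (v ⬝ᵥ b i) • b i = v := by
  have hrows : of b * (of b)ᵀ = 1 := by
    ext i j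
    exact hb i j
  have hcols : (of b)ᵀ * of b = 1 := mul_eq_one_comm.mp hrows
  calc ∑ i, (v ⬝ᵥ b i) • b i = (of b)ᵀ *ᵥ (of b *ᵥ v) := by
        simp only [mulVec_transpose, vecMul_eq_sum, mulVec, dotProduct_comm]
        rfl
    _ = v := by rw [mulVec_mulVec, hcols, one_mulVec]

theorem dotProduct_eq_of_orthonormal {ι R : Type*} [Fintype ι] [DecidableEq ι]
    [CommRing R] (b : ι → ι → R) (hb : ∀ i j, b i ⬝ᵥ b j = (1 : Matrix ι ι R) i j)
    (w v : ι → R) : w ⬝ᵥ v = ∑ i, (w ⬝ᵥ b i) * (v ⬝ᵥ b i) := by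
  conv_lhs => rw [← sum_dotProduct_smul_of_orthonormal b hb v]
  simp only [dotProduct_sum, dotProduct_smul, smul_eq_mul, mul_comm]

theorem dotProduct_eq_of_orthonormal_pair {R : Type*} [CommRing R] {n m : Fin 2 → R}
    (hn : n ⬝ᵥ n = 1) (hm : m ⬝ᵥ m = 1) (hnm : n ⬝ᵥ m = 0) (w v : Fin 2 → R) :
    w ⬝ᵥ v = (w ⬝ᵥ n) * (v ⬝ᵥ n) + (w ⬝ᵥ m) * (v ⬝ᵥ m) := by
  have hb : ∀ i j, ![n, m] i ⬝ᵥ ![n, m] j = (1 : Matrix (Fin 2) (Fin 2) R) i j := by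
    intro i j
    fin_cases i <;> fin_cases j <;> simp [hn, hm, hnm, dotProduct_comm m n]
  simpa [Fin.sum_univ_two] using dotProduct_eq_of_orthonormal ![n, m] hb w v

/-- The algebraic core of Theorem 1: with the numerical fluxes of the
energy-based DG interface coupling, the interface power `I` equals
`α(n·σn − p)² + β(g·n − v·n)²` for all τ, α, β, p, g, v, σ. -/
theorem interface_flux_identity (n m : Fin 2 → ℝ)
    (hn : n ⬝ᵥ n = 1) (hm : m ⬝ᵥ m = 1) (hnm : n ⬝ᵥ m = 0)
    (τ α β p : ℝ) (g v : Fin 2 → ℝ) (σ : Matrix (Fin 2) (Fin 2) ℝ) :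
    let s : ℝ := n ⬝ᵥ σ.mulVec n
    -- normal component of v*: the flux (21)
    let vstarn : ℝ := τ * (v ⬝ᵥ n) + (1 - τ) * (g ⬝ᵥ n) - α * (s - p)
    -- tangential component of v*: the flux (22)
    let vstarm : ℝ := v ⬝ᵥ m
    -- p* = n·(σn)*: the flux (23)
    let pstar : ℝ := τ * p + (1 - τ) * s - β * ((v - g) ⬝ᵥ n)
    -- v* and (σn)* reconstructed from their components (m·(σn)* = 0 by (24))
    let vstar : Fin 2 → ℝ := vstarn • n + vstarm • m
    let σnstar : Fin 2 → ℝ := pstar • n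
    -- the interface power, with (g·n)* = v*·n
    (pstar - p) * (g ⬝ᵥ n) + p * vstarn
      - (σ.mulVec n) ⬝ᵥ (vstar - v) - σnstar ⬝ᵥ v
      = α * (s - p) ^ 2 + β * ((g ⬝ᵥ n) - (v ⬝ᵥ n)) ^ 2 := by
  intro s vstarn vstarm pstar vstar σnstar
  have hjump : σ *ᵥ n ⬝ᵥ (vstar - v) = (vstarn - v ⬝ᵥ n) * s := by
    rw [dotProduct_sub, dotProduct_eq_of_orthonormal_pair hn hm hnm _ v]
    simp only [vstar, vstarm, dotProduct_add, dotProduct_smul, smul_eq_mul, dotProduct_comm _ n]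
    ring
  have hpstar : σnstar ⬝ᵥ v = pstar * (v ⬝ᵥ n) := by
    simp only [σnstar, smul_dotProduct, smul_eq_mul, dotProduct_comm n v]
  rw [hjump, hpstar]
  simp only [vstarn, pstar, sub_dotProduct]
  ring
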